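/- arXiv:2104.14591 — 4 statements merged into one kernel-verified Lean document; each statement's English description precedes it below -/
import Mathlib

section
/- Fix ω > 0 and a real exponent x with 1 < x < 3/2. Then the function G(ω₂,ω₃) = min(√ω, √ω₁, √ω₂, √ω₃) · (ω·ω₁·ω₂·ω₃)^(−x) · (ω^x + ω₁^x − ω₂^x − ω₃^x), where ω₁ = ω₂ + ω₃ − ω, is Lebesgue integrable on the domain Δ_ω = {(ω₂,ω₃) ∈ ℝ² : ω₂ > 0, ω₃ > 0, ω₂ + ω₃ > ω}. (This is the convergence of the wave-kinetic collision integral on the power-law spectrum n_ω = ω^(−x) after eliminating the frequency delta function.) -/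
open MeasureTheory Real Set

private lemma mvt_rpow {x hi A B : ℝ} (hx : 1 ≤ x) (hA : 0 ≤ A) (hAB : A ≤ B) (hB : B ≤ hi) :
    B ^ x - A ^ x ≤ x * hi ^ (x - 1) * (B - A) := by
  rcases eq_or_lt_of_le hAB with rfl | hlt
  · simp
  have hcont : ContinuousOn (fun t : ℝ => t ^ x) (Icc A B) := fun t _ =>
    (Real.hasDerivAt_rpow_const (Or.inr hx)).continuousAt.continuousWithinAt
  have hderiv : ∀ t ∈ Ioo A B, HasDerivAt (fun t : ℝ => t ^ x) (x * t ^ (x - 1)) t :=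
    fun t _ => Real.hasDerivAt_rpow_const (Or.inr hx)
  obtain ⟨c, hc, hceq⟩ := exists_hasDerivAt_eq_slope _ _ hlt hcont hderiv
  have hc0 : 0 ≤ c := le_trans hA hc.1.le
  rw [eq_div_iff (by linarith : B - A ≠ 0)] at hceq
  have heq : B ^ x - A ^ x = x * c ^ (x - 1) * (B - A) := by linarith
  rw [heq]
  have hchi : c ^ (x - 1) ≤ hi ^ (x - 1) :=
    Real.rpow_le_rpow hc0 (le_trans hc.2.le hB) (by linarith)
  have hx0 : (0:ℝ) ≤ x := by linarith
  exact mul_le_mul_of_nonneg_right (mul_le_mul_of_nonneg_left hchi hx0) (by linarith)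

private lemma abs_rpow_sub_rpow_le {x hi A B : ℝ} (hx : 1 ≤ x) (hA : 0 ≤ A) (hB : 0 ≤ B)
    (hAh : A ≤ hi) (hBh : B ≤ hi) : |B ^ x - A ^ x| ≤ x * hi ^ (x - 1) * |B - A| := by
  rcases le_total A B with h | h
  · have hn : (0:ℝ) ≤ B ^ x - A ^ x := by
      nlinarith [Real.rpow_le_rpow hA h (by linarith : (0:ℝ) ≤ x)]
    rw [abs_of_nonneg hn, abs_of_nonneg (by linarith)]
    exact mvt_rpow hx hA h hBh
  · have hn : (0:ℝ) ≤ A ^ x - B ^ x := by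
      nlinarith [Real.rpow_le_rpow hB h (by linarith : (0:ℝ) ≤ x)]
    rw [abs_sub_comm, abs_sub_comm B A, abs_of_nonneg hn, abs_of_nonneg (by linarith)]
    exact mvt_rpow hx hB h hAh

private lemma integrable_shear1 {f g : ℝ → ℝ} (hf : Integrable f) (hg : Integrable g) :
    Integrable (fun p : ℝ × ℝ => f p.1 * g (p.1 + p.2)) := by
  have h0 : Integrable (fun p : ℝ × ℝ => f p.1 * g p.2) ((volume : Measure ℝ).prod volume) :=
    hf.mul_prod hg
  have hmp := measurePreserving_prod_add (volume : Measure ℝ) (volume : Measure ℝ)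
  have h1 := (hmp.integrable_comp h0.aestronglyMeasurable).2 h0
  rw [Measure.volume_eq_prod]
  simpa [Function.comp_def] using h1

private lemma integrable_shear2 {f g : ℝ → ℝ} (hf : Integrable f) (hg : Integrable g) :
    Integrable (fun p : ℝ × ℝ => f p.2 * g (p.1 + p.2)) := by
  have h0 : Integrable (fun p : ℝ × ℝ => f p.1 * g p.2) ((volume : Measure ℝ).prod volume) :=
    hf.mul_prod hg
  have hmp := measurePreserving_prod_add_swap (volume : Measure ℝ) (volume : Measure ℝ)
  have h1 := (hmp.integrable_comp h0.aestronglyMeasurable).2 h0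
  rw [Measure.volume_eq_prod]
  simp only [Function.comp_def] at h1
  refine h1.congr (Filter.Eventually.of_forall fun z => by dsimp; ring_nf)

private lemma integrableOn_prod_mul' {f g : ℝ → ℝ} {s t : Set ℝ}
    (hf : IntegrableOn f s) (hg : IntegrableOn g t) :
    IntegrableOn (fun p : ℝ × ℝ => f p.1 * g p.2) (s ×ˢ t) := by
  unfold IntegrableOn
  rw [Measure.volume_eq_prod, ← Measure.prod_restrict]
  exact hf.mul_prod hg

private noncomputable def E (ω x a b : ℝ) : ℝ :=
  min (Real.sqrt ω) (min (Real.sqrt (a + b - ω)) (min (Real.sqrt a) (Real.sqrt b))) *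
    (ω * (a + b - ω) * a * b) ^ (-x) * (ω ^ x + (a + b - ω) ^ x - a ^ x - b ^ x)

private lemma E_swap (ω x a b : ℝ) : E ω x a b = E ω x b a := by
  unfold E
  rw [show b + a - ω = a + b - ω from by ring, min_comm (Real.sqrt b) (Real.sqrt a),
    show ω * (a + b - ω) * b * a = ω * (a + b - ω) * a * b from by ring]
  ring

private lemma E_abs_eq {ω x a b : ℝ} (hω : 0 < ω) (ha : 0 < a) (hb : 0 < b)
    (hc : 0 < a + b - ω) :
    |E ω x a b| =
      min (Real.sqrt ω) (min (Real.sqrt (a + b - ω)) (min (Real.sqrt a) (Real.sqrt b))) *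
        (ω ^ (-x) * (a + b - ω) ^ (-x) * a ^ (-x) * b ^ (-x)) *
        |ω ^ x + (a + b - ω) ^ x - a ^ x - b ^ x| := by
  have hM0 : 0 ≤ min (Real.sqrt ω) (min (Real.sqrt (a + b - ω))
      (min (Real.sqrt a) (Real.sqrt b))) :=
    le_min (Real.sqrt_nonneg _) (le_min (Real.sqrt_nonneg _)
      (le_min (Real.sqrt_nonneg _) (Real.sqrt_nonneg _)))
  have h1 : (ω * (a + b - ω) * a * b) ^ (-x)
      = ω ^ (-x) * (a + b - ω) ^ (-x) * a ^ (-x) * b ^ (-x) := by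
    rw [Real.mul_rpow (by positivity) hb.le, Real.mul_rpow (by positivity) ha.le,
      Real.mul_rpow hω.le hc.le]
  unfold E
  rw [abs_mul, abs_mul, abs_of_nonneg hM0, abs_of_nonneg (by positivity), h1]

private lemma bound_R3 {ω x a b : ℝ} (hω : 0 < ω) (hx1 : 1 < x) (ha : ω < a) (hb : ω < b) :
    |E ω x a b| ≤ (4 * Real.sqrt ω * ω ^ (-x)) * (a ^ (-x) * b ^ (-x)) := by
  have ha0 : 0 < a := hω.trans ha
  have hb0 : 0 < b := hω.trans hb
  have hc : 0 < a + b - ω := by linarith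
  have hx0 : (0:ℝ) ≤ x := by linarith
  rw [E_abs_eq hω ha0 hb0 hc]
  have hMω : min (Real.sqrt ω) (min (Real.sqrt (a + b - ω))
      (min (Real.sqrt a) (Real.sqrt b))) ≤ Real.sqrt ω := min_le_left _ _
  have h1 : a ^ x ≤ (a + b - ω) ^ x := Real.rpow_le_rpow ha0.le (by linarith) hx0
  have h2 : b ^ x ≤ (a + b - ω) ^ x := Real.rpow_le_rpow hb0.le (by linarith) hx0
  have h3 : ω ^ x ≤ (a + b - ω) ^ x := Real.rpow_le_rpow hω.le (by linarith) hx0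
  have hB : |ω ^ x + (a + b - ω) ^ x - a ^ x - b ^ x| ≤ 4 * (a + b - ω) ^ x := by
    rw [abs_le]
    have n1 := Real.rpow_nonneg ha0.le x
    have n2 := Real.rpow_nonneg hb0.le x
    have n3 := Real.rpow_nonneg hω.le x
    have n4 := Real.rpow_nonneg hc.le x
    constructor <;> linarith
  calc min (Real.sqrt ω) (min (Real.sqrt (a + b - ω)) (min (Real.sqrt a) (Real.sqrt b))) *
        (ω ^ (-x) * (a + b - ω) ^ (-x) * a ^ (-x) * b ^ (-x)) *
        |ω ^ x + (a + b - ω) ^ x - a ^ x - b ^ x|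
      ≤ Real.sqrt ω * (ω ^ (-x) * (a + b - ω) ^ (-x) * a ^ (-x) * b ^ (-x)) *
        (4 * (a + b - ω) ^ x) := by
        apply mul_le_mul (mul_le_mul_of_nonneg_right hMω (by positivity)) hB (abs_nonneg _)
          (by positivity)
    _ = (4 * Real.sqrt ω * ω ^ (-x)) * (a ^ (-x) * b ^ (-x)) *
        ((a + b - ω) ^ (-x) * (a + b - ω) ^ x) := by ring
    _ = (4 * Real.sqrt ω * ω ^ (-x)) * (a ^ (-x) * b ^ (-x)) := by
        rw [← Real.rpow_add hc]
        simp

private lemma bound_R1b {ω x a b : ℝ} (hω : 0 < ω) (hx1 : 1 < x) (ha0 : 0 < a) (ha : a ≤ ω)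
    (hb : 2 * ω < b) :
    |E ω x a b| ≤ (4 * 2 ^ x * ω ^ (-x)) * (a ^ (1/2 - x) * b ^ (-x)) := by
  have hb0 : 0 < b := by linarith
  have hc : 0 < a + b - ω := by linarith
  have hx0 : (0:ℝ) ≤ x := by linarith
  rw [E_abs_eq hω ha0 hb0 hc]
  have hMa : min (Real.sqrt ω) (min (Real.sqrt (a + b - ω))
      (min (Real.sqrt a) (Real.sqrt b))) ≤ Real.sqrt a :=
    (min_le_right _ _).trans ((min_le_right _ _).trans (min_le_left _ _))
  have h1 : a ^ x ≤ b ^ x := Real.rpow_le_rpow ha0.le (by linarith) hx0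
  have h2 : (a + b - ω) ^ x ≤ b ^ x := Real.rpow_le_rpow hc.le (by linarith) hx0
  have h3 : ω ^ x ≤ b ^ x := Real.rpow_le_rpow hω.le (by linarith) hx0
  have hB : |ω ^ x + (a + b - ω) ^ x - a ^ x - b ^ x| ≤ 4 * b ^ x := by
    rw [abs_le]
    have n1 := Real.rpow_nonneg ha0.le x
    have n2 := Real.rpow_nonneg hb0.le x
    have n3 := Real.rpow_nonneg hω.le x
    have n4 := Real.rpow_nonneg hc.le x
    constructor <;> linarith
  have hcx : (a + b - ω) ^ (-x) ≤ 2 ^ x * b ^ (-x) := by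
    have hh : (b / 2) ^ (-x) = 2 ^ x * b ^ (-x) := by
      rw [div_eq_mul_inv, Real.mul_rpow hb0.le (by norm_num),
        Real.inv_rpow (by norm_num : (0:ℝ) ≤ 2), Real.rpow_neg (by norm_num : (0:ℝ) ≤ 2),
        inv_inv]
      ring
    have h4 : (a + b - ω) ^ (-x) ≤ (b / 2) ^ (-x) :=
      Real.rpow_le_rpow_of_nonpos (by linarith) (by linarith) (by linarith)
    linarith
  have hP : ω ^ (-x) * (a + b - ω) ^ (-x) * a ^ (-x) * b ^ (-x)
      ≤ ω ^ (-x) * (2 ^ x * b ^ (-x)) * a ^ (-x) * b ^ (-x) := by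
    have k0 : (0:ℝ) ≤ ω ^ (-x) := by positivity
    have k1 : (0:ℝ) ≤ a ^ (-x) := by positivity
    have k2 : (0:ℝ) ≤ b ^ (-x) := by positivity
    nlinarith [mul_nonneg k0 (mul_nonneg k1 k2)]
  calc min (Real.sqrt ω) (min (Real.sqrt (a + b - ω)) (min (Real.sqrt a) (Real.sqrt b))) *
        (ω ^ (-x) * (a + b - ω) ^ (-x) * a ^ (-x) * b ^ (-x)) *
        |ω ^ x + (a + b - ω) ^ x - a ^ x - b ^ x|
      ≤ Real.sqrt a * (ω ^ (-x) * (2 ^ x * b ^ (-x)) * a ^ (-x) * b ^ (-x)) * (4 * b ^ x) := by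
        apply mul_le_mul (mul_le_mul hMa hP (by positivity) (Real.sqrt_nonneg a)) hB
          (abs_nonneg _) (by positivity)
    _ = (4 * 2 ^ x * ω ^ (-x)) * ((Real.sqrt a * a ^ (-x)) * b ^ (-x)) *
        (b ^ (-x) * b ^ x) := by ring
    _ = (4 * 2 ^ x * ω ^ (-x)) * (a ^ (1/2 - x) * b ^ (-x)) := by
        have e1 : Real.sqrt a * a ^ (-x) = a ^ (1/2 - x) := by
          rw [Real.sqrt_eq_rpow, ← Real.rpow_add ha0,
            show 1/(2:ℝ) + -x = 1/2 - x from by ring]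
        have e2 : b ^ (-x) * b ^ x = 1 := by
          rw [← Real.rpow_add hb0]
          simp
        rw [e1, e2]
        try ring

private lemma bound_S1 {ω x a b : ℝ} (hω : 0 < ω) (hx1 : 1 < x) (ha1 : ω/2 ≤ a)
    (ha2 : a ≤ 2*ω) (hb1 : ω/2 ≤ b) (hb2 : b ≤ 2*ω) (hsum : ω < a + b) :
    |E ω x a b| ≤ (ω ^ (-x) * (ω/2) ^ (-x) * (ω/2) ^ (-x) *
      (ω ^ x + (3*ω) ^ x + (2*ω) ^ x + (2*ω) ^ x)) * (a + b - ω) ^ (1/2 - x) := by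
  have ha0 : 0 < a := by linarith
  have hb0 : 0 < b := by linarith
  have hc : 0 < a + b - ω := by linarith
  have hx0 : (0:ℝ) ≤ x := by linarith
  rw [E_abs_eq hω ha0 hb0 hc]
  have hMc : min (Real.sqrt ω) (min (Real.sqrt (a + b - ω))
      (min (Real.sqrt a) (Real.sqrt b))) ≤ Real.sqrt (a + b - ω) :=
    (min_le_right _ _).trans (min_le_left _ _)
  have h1 : a ^ x ≤ (2*ω) ^ x := Real.rpow_le_rpow ha0.le ha2 hx0
  have h2 : b ^ x ≤ (2*ω) ^ x := Real.rpow_le_rpow hb0.le hb2 hx0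
  have h3 : (a + b - ω) ^ x ≤ (3*ω) ^ x := Real.rpow_le_rpow hc.le (by linarith) hx0
  have hB : |ω ^ x + (a + b - ω) ^ x - a ^ x - b ^ x|
      ≤ ω ^ x + (3*ω) ^ x + (2*ω) ^ x + (2*ω) ^ x := by
    rw [abs_le]
    have n1 := Real.rpow_nonneg ha0.le x
    have n2 := Real.rpow_nonneg hb0.le x
    have n3 := Real.rpow_nonneg hω.le x
    have n4 := Real.rpow_nonneg hc.le x
    have n5 := Real.rpow_nonneg (by linarith : (0:ℝ) ≤ 3*ω) x
    have n6 := Real.rpow_nonneg (by linarith : (0:ℝ) ≤ 2*ω) x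
    constructor <;> linarith
  have hax : a ^ (-x) ≤ (ω/2) ^ (-x) :=
    Real.rpow_le_rpow_of_nonpos (by linarith) ha1 (by linarith)
  have hbx : b ^ (-x) ≤ (ω/2) ^ (-x) :=
    Real.rpow_le_rpow_of_nonpos (by linarith) hb1 (by linarith)
  have hP : ω ^ (-x) * (a + b - ω) ^ (-x) * a ^ (-x) * b ^ (-x)
      ≤ ω ^ (-x) * (a + b - ω) ^ (-x) * (ω/2) ^ (-x) * (ω/2) ^ (-x) := by
    have s1 : ω ^ (-x) * (a + b - ω) ^ (-x) * a ^ (-x) * b ^ (-x)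
        ≤ ω ^ (-x) * (a + b - ω) ^ (-x) * (ω/2) ^ (-x) * b ^ (-x) :=
      mul_le_mul_of_nonneg_right (mul_le_mul_of_nonneg_left hax (by positivity))
        (by positivity)
    have s2 : ω ^ (-x) * (a + b - ω) ^ (-x) * (ω/2) ^ (-x) * b ^ (-x)
        ≤ ω ^ (-x) * (a + b - ω) ^ (-x) * (ω/2) ^ (-x) * (ω/2) ^ (-x) :=
      mul_le_mul_of_nonneg_left hbx (by positivity)
    linarith
  calc min (Real.sqrt ω) (min (Real.sqrt (a + b - ω)) (min (Real.sqrt a) (Real.sqrt b))) *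
        (ω ^ (-x) * (a + b - ω) ^ (-x) * a ^ (-x) * b ^ (-x)) *
        |ω ^ x + (a + b - ω) ^ x - a ^ x - b ^ x|
      ≤ Real.sqrt (a + b - ω) *
          (ω ^ (-x) * (a + b - ω) ^ (-x) * (ω/2) ^ (-x) * (ω/2) ^ (-x)) *
          (ω ^ x + (3*ω) ^ x + (2*ω) ^ x + (2*ω) ^ x) := by
        apply mul_le_mul (mul_le_mul hMc hP (by positivity) (Real.sqrt_nonneg _)) hB
          (abs_nonneg _) (by positivity)
    _ = (ω ^ (-x) * (ω/2) ^ (-x) * (ω/2) ^ (-x) *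
          (ω ^ x + (3*ω) ^ x + (2*ω) ^ x + (2*ω) ^ x)) *
          (Real.sqrt (a + b - ω) * (a + b - ω) ^ (-x)) := by ring
    _ = _ := by
        rw [Real.sqrt_eq_rpow, ← Real.rpow_add hc,
          show 1/(2:ℝ) + -x = 1/2 - x from by ring]

private lemma bound_S2 {ω x a b : ℝ} (hω : 0 < ω) (hx1 : 1 < x) (ha0 : 0 < a)
    (ha : a ≤ ω/2) (hb1 : ω/2 < b) (hb2 : b ≤ 2*ω) (hsum : ω < a + b) :
    |E ω x a b| ≤ (ω ^ (-x) * (ω/2) ^ (-x) * (x * (2*ω) ^ (x-1) + (3*ω/2) ^ (x-1))) *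
      (a ^ (1 - x) * (a + b - ω) ^ (1/2 - x) + a ^ (1/2 - x) * (a + b - ω) ^ (1 - x)) := by
  have hb0 : 0 < b := by linarith
  have hc : 0 < a + b - ω := by linarith
  have hc2 : a + b - ω ≤ 3*ω/2 := by linarith
  have hx0 : (0:ℝ) < x := by linarith
  rw [E_abs_eq hω ha0 hb0 hc]
  have hMa : min (Real.sqrt ω) (min (Real.sqrt (a + b - ω)) (min (Real.sqrt a) (Real.sqrt b)))
      ≤ Real.sqrt a :=
    (min_le_right _ _).trans ((min_le_right _ _).trans (min_le_left _ _))
  have hMc : min (Real.sqrt ω) (min (Real.sqrt (a + b - ω)) (min (Real.sqrt a) (Real.sqrt b)))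
      ≤ Real.sqrt (a + b - ω) := (min_le_right _ _).trans (min_le_left _ _)
  have hM0 : 0 ≤ min (Real.sqrt ω) (min (Real.sqrt (a + b - ω))
      (min (Real.sqrt a) (Real.sqrt b))) :=
    le_min (Real.sqrt_nonneg _) (le_min (Real.sqrt_nonneg _)
      (le_min (Real.sqrt_nonneg _) (Real.sqrt_nonneg _)))
  have hL0 : 0 ≤ x * (2*ω) ^ (x-1) + (3*ω/2) ^ (x-1) := by positivity
  -- cancellation bound on the bracket
  have t1 : |ω ^ x - b ^ x| ≤ x * (2*ω) ^ (x-1) * |ω - b| :=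
    abs_rpow_sub_rpow_le hx1.le hb0.le hω.le (by linarith) (by linarith)
  have t1' : |ω - b| ≤ a + (a + b - ω) := by
    rw [abs_le]; constructor <;> linarith
  have t1'' : |ω ^ x - b ^ x| ≤ x * (2*ω) ^ (x-1) * (a + (a + b - ω)) :=
    t1.trans (mul_le_mul_of_nonneg_left t1' (by positivity))
  have hmono : ∀ t : ℝ, 0 < t → t ≤ 3*ω/2 → t ^ x ≤ (3*ω/2) ^ (x-1) * t := by
    intro t ht ht2
    have e : t ^ (x-1) * t ^ (1:ℝ) = t ^ x := by
      rw [← Real.rpow_add ht, show x - 1 + 1 = x from by ring]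
    have mono : t ^ (x-1) ≤ (3*ω/2) ^ (x-1) := Real.rpow_le_rpow ht.le ht2 (by linarith)
    calc t ^ x = t ^ (x-1) * t := by rw [← e, Real.rpow_one]
      _ ≤ (3*ω/2) ^ (x-1) * t := mul_le_mul_of_nonneg_right mono ht.le
  have t3 := hmono a ha0 (by linarith)
  have t2 := hmono (a + b - ω) hc hc2
  have t4 : |(a + b - ω) ^ x - a ^ x| ≤ (3*ω/2) ^ (x-1) * (a + (a + b - ω)) := by
    have n1 := Real.rpow_nonneg ha0.le x
    have n2 := Real.rpow_nonneg hc.le x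
    have n3 : 0 ≤ (3*ω/2) ^ (x-1) * a := by positivity
    have n4 : 0 ≤ (3*ω/2) ^ (x-1) * (a + b - ω) := by positivity
    rw [abs_le]
    constructor <;> · rw [mul_add] <;> linarith
  have hB : |ω ^ x + (a + b - ω) ^ x - a ^ x - b ^ x|
      ≤ x * (2*ω) ^ (x-1) * (a + (a + b - ω))
        + (3*ω/2) ^ (x-1) * (a + (a + b - ω)) := by
    have split : ω ^ x + (a + b - ω) ^ x - a ^ x - b ^ x
        = (ω ^ x - b ^ x) + ((a + b - ω) ^ x - a ^ x) := by ring
    rw [split]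
    exact (abs_add_le _ _).trans (add_le_add t1'' t4)
  have hbx : b ^ (-x) ≤ (ω/2) ^ (-x) :=
    Real.rpow_le_rpow_of_nonpos (by linarith) hb1.le (by linarith)
  have hPb : ω ^ (-x) * (a + b - ω) ^ (-x) * a ^ (-x) * b ^ (-x)
      ≤ ω ^ (-x) * (a + b - ω) ^ (-x) * a ^ (-x) * (ω/2) ^ (-x) :=
    mul_le_mul_of_nonneg_left hbx (by positivity)
  calc min (Real.sqrt ω) (min (Real.sqrt (a + b - ω)) (min (Real.sqrt a) (Real.sqrt b))) *
        (ω ^ (-x) * (a + b - ω) ^ (-x) * a ^ (-x) * b ^ (-x)) *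
        |ω ^ x + (a + b - ω) ^ x - a ^ x - b ^ x|
      ≤ min (Real.sqrt ω) (min (Real.sqrt (a + b - ω)) (min (Real.sqrt a) (Real.sqrt b))) *
        (ω ^ (-x) * (a + b - ω) ^ (-x) * a ^ (-x) * b ^ (-x)) *
        (x * (2*ω) ^ (x-1) * (a + (a + b - ω))
          + (3*ω/2) ^ (x-1) * (a + (a + b - ω))) :=
      mul_le_mul_of_nonneg_left hB (mul_nonneg hM0 (by positivity))
    _ = (x * (2*ω) ^ (x-1) + (3*ω/2) ^ (x-1)) *
        (min (Real.sqrt ω) (min (Real.sqrt (a + b - ω)) (min (Real.sqrt a) (Real.sqrt b))) * a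
          + min (Real.sqrt ω) (min (Real.sqrt (a + b - ω)) (min (Real.sqrt a) (Real.sqrt b)))
            * (a + b - ω)) *
        (ω ^ (-x) * (a + b - ω) ^ (-x) * a ^ (-x) * b ^ (-x)) := by ring
    _ ≤ (x * (2*ω) ^ (x-1) + (3*ω/2) ^ (x-1)) *
        (Real.sqrt (a + b - ω) * a + Real.sqrt a * (a + b - ω)) *
        (ω ^ (-x) * (a + b - ω) ^ (-x) * a ^ (-x) * (ω/2) ^ (-x)) := by
      apply mul_le_mul
      · exact mul_le_mul_of_nonneg_left
          (add_le_add (mul_le_mul_of_nonneg_right hMc ha0.le)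
            (mul_le_mul_of_nonneg_right hMa hc.le)) hL0
      · exact hPb
      · positivity
      · have : 0 ≤ Real.sqrt (a + b - ω) * a + Real.sqrt a * (a + b - ω) := by positivity
        exact mul_nonneg hL0 this
    _ = (ω ^ (-x) * (ω/2) ^ (-x) * (x * (2*ω) ^ (x-1) + (3*ω/2) ^ (x-1))) *
        (a ^ (1 - x) * (a + b - ω) ^ (1/2 - x) + a ^ (1/2 - x) * (a + b - ω) ^ (1 - x)) := by
      have ea : a ^ ((1:ℝ) - x) = a * a ^ (-x) := by
        rw [show (1:ℝ) - x = 1 + -x from by ring, Real.rpow_add ha0, Real.rpow_one]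
      have ea2 : a ^ (1/2 - x) = Real.sqrt a * a ^ (-x) := by
        rw [show 1/(2:ℝ) - x = 1/2 + -x from by ring, Real.rpow_add ha0, Real.sqrt_eq_rpow]
      have ec : (a + b - ω) ^ ((1:ℝ) - x) = (a + b - ω) * (a + b - ω) ^ (-x) := by
        rw [show (1:ℝ) - x = 1 + -x from by ring, Real.rpow_add hc, Real.rpow_one]
      have ec2 : (a + b - ω) ^ (1/2 - x) = Real.sqrt (a + b - ω) * (a + b - ω) ^ (-x) := by
        rw [show 1/(2:ℝ) - x = 1/2 + -x from by ring, Real.rpow_add hc, Real.sqrt_eq_rpow]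
      rw [ea, ea2, ec, ec2]
      ring

set_option maxHeartbeats 1000000 in
/-- Convergence of the wave-kinetic collision integral on the power-law spectrum
`n_ω = ω^(-x)` for `1 < x < 3/2`: the integrand obtained after eliminating the
frequency delta function is Lebesgue integrable on
`Δ_ω = {(ω₂, ω₃) : ω₂ > 0, ω₃ > 0, ω₂ + ω₃ > ω}`. -/
theorem collision_integrand_integrableOn_of_lt
    (ω x : ℝ) (hω : 0 < ω) (hx1 : 1 < x) (hx2 : x < 3 / 2) :
    IntegrableOn
      (fun p : ℝ × ℝ =>
        min (Real.sqrt ω)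
            (min (Real.sqrt (p.1 + p.2 - ω)) (min (Real.sqrt p.1) (Real.sqrt p.2))) *
          (ω * (p.1 + p.2 - ω) * p.1 * p.2) ^ (-x) *
          (ω ^ x + (p.1 + p.2 - ω) ^ x - p.1 ^ x - p.2 ^ x))
      {p : ℝ × ℝ | 0 < p.1 ∧ 0 < p.2 ∧ ω < p.1 + p.2} := by
  rw [show (fun p : ℝ × ℝ =>
        min (Real.sqrt ω)
            (min (Real.sqrt (p.1 + p.2 - ω)) (min (Real.sqrt p.1) (Real.sqrt p.2))) *
          (ω * (p.1 + p.2 - ω) * p.1 * p.2) ^ (-x) *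
          (ω ^ x + (p.1 + p.2 - ω) ^ x - p.1 ^ x - p.2 ^ x)) = fun p : ℝ × ℝ => E ω x p.1 p.2
    from rfl]
  -- measurability
  have hmeas_sum : Measurable fun p : ℝ × ℝ => p.1 + p.2 - ω :=
    (measurable_fst.add measurable_snd).sub measurable_const
  have hsqrt : Measurable Real.sqrt := Real.continuous_sqrt.measurable
  have hEm : Measurable fun p : ℝ × ℝ => E ω x p.1 p.2 := by
    unfold E
    exact ((measurable_const.min ((hsqrt.comp hmeas_sum).min
        ((hsqrt.comp measurable_fst).min (hsqrt.comp measurable_snd)))).mul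
      ((((measurable_const.mul hmeas_sum).mul measurable_fst).mul measurable_snd).pow
        measurable_const)).mul
      (((measurable_const.add (hmeas_sum.pow measurable_const)).sub
        (measurable_fst.pow measurable_const)).sub (measurable_snd.pow measurable_const))
  have hEam : AEStronglyMeasurable (fun p : ℝ × ℝ => E ω x p.1 p.2) volume :=
    hEm.aestronglyMeasurable
  -- one-dimensional integrability facts
  have hIoiω : IntegrableOn (fun t : ℝ => t ^ (-x)) (Ioi ω) :=
    integrableOn_Ioi_rpow_of_lt (by linarith) hω
  have hIoi2ω : IntegrableOn (fun t : ℝ => t ^ (-x)) (Ioi (2*ω)) :=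
    integrableOn_Ioi_rpow_of_lt (by linarith) (by linarith)
  have hIocω : IntegrableOn (fun t : ℝ => t ^ (1/2 - x)) (Ioc 0 ω) :=
    (intervalIntegral.intervalIntegrable_rpow' (by linarith)).1
  have hf1 : Integrable ((Ioc 0 (ω/2)).indicator fun t : ℝ => t ^ (1 - x)) := by
    rw [integrable_indicator_iff measurableSet_Ioc]
    exact (intervalIntegral.intervalIntegrable_rpow' (by linarith)).1
  have hf2 : Integrable ((Ioc 0 (ω/2)).indicator fun t : ℝ => t ^ (1/2 - x)) := by
    rw [integrable_indicator_iff measurableSet_Ioc]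
    exact (intervalIntegral.intervalIntegrable_rpow' (by linarith)).1
  have hone : Integrable ((Icc (ω/2) (2*ω)).indicator fun _ : ℝ => (1:ℝ)) := by
    rw [integrable_indicator_iff measurableSet_Icc]
    exact integrableOn_const measure_Icc_lt_top.ne
  have hg1 : Integrable (fun u : ℝ =>
      ((Ioc 0 (2*ω)).indicator fun t : ℝ => t ^ (1/2 - x)) (u - ω)) := by
    have h : Integrable ((Ioc 0 (2*ω)).indicator fun t : ℝ => t ^ (1/2 - x)) := by
      rw [integrable_indicator_iff measurableSet_Ioc]
      exact (intervalIntegral.intervalIntegrable_rpow' (by linarith)).1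
    exact h.comp_sub_right ω
  have hg2 : Integrable (fun u : ℝ =>
      ((Ioc 0 (2*ω)).indicator fun t : ℝ => t ^ (1 - x)) (u - ω)) := by
    have h : Integrable ((Ioc 0 (2*ω)).indicator fun t : ℝ => t ^ (1 - x)) := by
      rw [integrable_indicator_iff measurableSet_Ioc]
      exact (intervalIntegral.intervalIntegrable_rpow' (by linarith)).1
    exact h.comp_sub_right ω
  have hg3 : Integrable (fun u : ℝ =>
      ((Ioc 0 (3*ω)).indicator fun t : ℝ => t ^ (1/2 - x)) (u - ω)) := by
    have h : Integrable ((Ioc 0 (3*ω)).indicator fun t : ℝ => t ^ (1/2 - x)) := by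
      rw [integrable_indicator_iff measurableSet_Ioc]
      exact (intervalIntegral.intervalIntegrable_rpow' (by linarith)).1
    exact h.comp_sub_right ω
  have hsum_meas : MeasurableSet {p : ℝ × ℝ | ω < p.1 + p.2} :=
    measurableSet_lt measurable_const (measurable_fst.add measurable_snd)
  -- region R3
  have hR3 : IntegrableOn (fun p : ℝ × ℝ => E ω x p.1 p.2) (Ioi ω ×ˢ Ioi ω) := by
    have hbd : IntegrableOn
        (fun p : ℝ × ℝ => (4 * Real.sqrt ω * ω ^ (-x)) * (p.1 ^ (-x) * p.2 ^ (-x)))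
        (Ioi ω ×ˢ Ioi ω) := (integrableOn_prod_mul' hIoiω hIoiω).const_mul _
    refine hbd.mono' hEam.restrict ?_
    rw [ae_restrict_iff' (measurableSet_Ioi.prod measurableSet_Ioi)]
    refine Filter.Eventually.of_forall ?_
    rintro ⟨a, b⟩ ⟨ha, hb⟩
    rw [Real.norm_eq_abs]
    exact bound_R3 hω hx1 ha hb
  -- region R1b
  have hR1b : IntegrableOn (fun p : ℝ × ℝ => E ω x p.1 p.2) (Ioc 0 ω ×ˢ Ioi (2*ω)) := by
    have hbd : IntegrableOn
        (fun p : ℝ × ℝ => (4 * 2 ^ x * ω ^ (-x)) * (p.1 ^ (1/2 - x) * p.2 ^ (-x)))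
        (Ioc 0 ω ×ˢ Ioi (2*ω)) := (integrableOn_prod_mul' hIocω hIoi2ω).const_mul _
    refine hbd.mono' hEam.restrict ?_
    rw [ae_restrict_iff' (measurableSet_Ioc.prod measurableSet_Ioi)]
    refine Filter.Eventually.of_forall ?_
    rintro ⟨a, b⟩ ⟨⟨ha0, ha⟩, hb⟩
    rw [Real.norm_eq_abs]
    exact bound_R1b hω hx1 ha0 ha hb
  -- region R2b
  have hR2b : IntegrableOn (fun p : ℝ × ℝ => E ω x p.1 p.2) (Ioi (2*ω) ×ˢ Ioc 0 ω) := by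
    have hbd : IntegrableOn
        (fun p : ℝ × ℝ => (4 * 2 ^ x * ω ^ (-x)) * (p.1 ^ (-x) * p.2 ^ (1/2 - x)))
        (Ioi (2*ω) ×ˢ Ioc 0 ω) := (integrableOn_prod_mul' hIoi2ω hIocω).const_mul _
    refine hbd.mono' hEam.restrict ?_
    rw [ae_restrict_iff' (measurableSet_Ioi.prod measurableSet_Ioc)]
    refine Filter.Eventually.of_forall ?_
    rintro ⟨a, b⟩ ⟨ha, hb0, hb⟩
    rw [Real.norm_eq_abs, E_swap]
    have h := bound_R1b hω hx1 hb0 hb ha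
    have h2 : (4 * 2 ^ x * ω ^ (-x)) * (b ^ (1/2 - x) * a ^ (-x))
        = (4 * 2 ^ x * ω ^ (-x)) * (a ^ (-x) * b ^ (1/2 - x)) := by ring
    dsimp only
    linarith [h, h2.le, h2.ge]
  -- region S1
  have hS1 : IntegrableOn (fun p : ℝ × ℝ => E ω x p.1 p.2)
      ((Icc (ω/2) (2*ω) ×ˢ Icc (ω/2) (2*ω)) ∩ {p : ℝ × ℝ | ω < p.1 + p.2}) := by
    have hbd : Integrable (fun p : ℝ × ℝ =>
        (ω ^ (-x) * (ω/2) ^ (-x) * (ω/2) ^ (-x) *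
          (ω ^ x + (3*ω) ^ x + (2*ω) ^ x + (2*ω) ^ x)) *
        (((Icc (ω/2) (2*ω)).indicator (fun _ : ℝ => (1:ℝ))) p.1 *
          ((Ioc 0 (3*ω)).indicator fun t : ℝ => t ^ (1/2 - x)) (p.1 + p.2 - ω))) :=
      (integrable_shear1 hone hg3).const_mul _
    refine hbd.integrableOn.mono' hEam.restrict ?_
    rw [ae_restrict_iff' ((measurableSet_Icc.prod measurableSet_Icc).inter hsum_meas)]
    refine Filter.Eventually.of_forall ?_
    rintro ⟨a, b⟩ ⟨⟨⟨ha1, ha2⟩, hb1, hb2⟩, hsum⟩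
    simp only [Set.mem_setOf_eq] at hsum
    dsimp only at ha1 ha2 hb1 hb2 hsum ⊢
    have hma : a ∈ Icc (ω/2) (2*ω) := Set.mem_Icc.mpr ⟨ha1, ha2⟩
    have hmc : a + b - ω ∈ Ioc 0 (3*ω) := Set.mem_Ioc.mpr ⟨by linarith, by linarith⟩
    rw [Real.norm_eq_abs, Set.indicator_of_mem hma, Set.indicator_of_mem hmc, one_mul]
    exact bound_S1 hω hx1 ha1 ha2 hb1 hb2 hsum
  -- region S2
  have hS2 : IntegrableOn (fun p : ℝ × ℝ => E ω x p.1 p.2)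
      ((Ioc 0 (ω/2) ×ˢ Ioc (ω/2) (2*ω)) ∩ {p : ℝ × ℝ | ω < p.1 + p.2}) := by
    have hbd : Integrable (fun p : ℝ × ℝ =>
        (ω ^ (-x) * (ω/2) ^ (-x) * (x * (2*ω) ^ (x-1) + (3*ω/2) ^ (x-1))) *
        (((Ioc 0 (ω/2)).indicator (fun t : ℝ => t ^ (1 - x))) p.1 *
            ((Ioc 0 (2*ω)).indicator fun t : ℝ => t ^ (1/2 - x)) (p.1 + p.2 - ω) +
          ((Ioc 0 (ω/2)).indicator (fun t : ℝ => t ^ (1/2 - x))) p.1 *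
            ((Ioc 0 (2*ω)).indicator fun t : ℝ => t ^ (1 - x)) (p.1 + p.2 - ω))) :=
      ((integrable_shear1 hf1 hg1).add (integrable_shear1 hf2 hg2)).const_mul _
    refine hbd.integrableOn.mono' hEam.restrict ?_
    rw [ae_restrict_iff' ((measurableSet_Ioc.prod measurableSet_Ioc).inter hsum_meas)]
    refine Filter.Eventually.of_forall ?_
    rintro ⟨a, b⟩ ⟨⟨⟨ha0, ha⟩, hb1, hb2⟩, hsum⟩
    simp only [Set.mem_setOf_eq] at hsum
    dsimp only at ha0 ha hb1 hb2 hsum ⊢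
    have hma : a ∈ Ioc 0 (ω/2) := Set.mem_Ioc.mpr ⟨ha0, ha⟩
    have hmc : a + b - ω ∈ Ioc 0 (2*ω) := Set.mem_Ioc.mpr ⟨by linarith, by linarith⟩
    rw [Real.norm_eq_abs,
      Set.indicator_of_mem hma (fun t : ℝ => t ^ (1 - x)),
      Set.indicator_of_mem hma (fun t : ℝ => t ^ (1/2 - x)),
      Set.indicator_of_mem hmc (fun t : ℝ => t ^ (1/2 - x)),
      Set.indicator_of_mem hmc (fun t : ℝ => t ^ (1 - x))]
    exact bound_S2 hω hx1 ha0 ha hb1 hb2 hsum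
  -- region S3
  have hS3 : IntegrableOn (fun p : ℝ × ℝ => E ω x p.1 p.2)
      ((Ioc (ω/2) (2*ω) ×ˢ Ioc 0 (ω/2)) ∩ {p : ℝ × ℝ | ω < p.1 + p.2}) := by
    have hbd : Integrable (fun p : ℝ × ℝ =>
        (ω ^ (-x) * (ω/2) ^ (-x) * (x * (2*ω) ^ (x-1) + (3*ω/2) ^ (x-1))) *
        (((Ioc 0 (ω/2)).indicator (fun t : ℝ => t ^ (1 - x))) p.2 *
            ((Ioc 0 (2*ω)).indicator fun t : ℝ => t ^ (1/2 - x)) (p.1 + p.2 - ω) +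
          ((Ioc 0 (ω/2)).indicator (fun t : ℝ => t ^ (1/2 - x))) p.2 *
            ((Ioc 0 (2*ω)).indicator fun t : ℝ => t ^ (1 - x)) (p.1 + p.2 - ω))) :=
      ((integrable_shear2 hf1 hg1).add (integrable_shear2 hf2 hg2)).const_mul _
    refine hbd.integrableOn.mono' hEam.restrict ?_
    rw [ae_restrict_iff' ((measurableSet_Ioc.prod measurableSet_Ioc).inter hsum_meas)]
    refine Filter.Eventually.of_forall ?_
    rintro ⟨a, b⟩ ⟨⟨⟨ha1, ha2⟩, hb0, hb⟩, hsum⟩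
    simp only [Set.mem_setOf_eq] at hsum
    dsimp only at ha1 ha2 hb0 hb hsum ⊢
    have hmb : b ∈ Ioc 0 (ω/2) := Set.mem_Ioc.mpr ⟨hb0, hb⟩
    have hmc : a + b - ω ∈ Ioc 0 (2*ω) := Set.mem_Ioc.mpr ⟨by linarith, by linarith⟩
    rw [Real.norm_eq_abs,
      Set.indicator_of_mem hmb (fun t : ℝ => t ^ (1 - x)),
      Set.indicator_of_mem hmb (fun t : ℝ => t ^ (1/2 - x)),
      Set.indicator_of_mem hmc (fun t : ℝ => t ^ (1/2 - x)),
      Set.indicator_of_mem hmc (fun t : ℝ => t ^ (1 - x)), E_swap]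
    have h := bound_S2 hω hx1 hb0 hb ha1 ha2 (by linarith : ω < b + a)
    rw [show b + a - ω = a + b - ω from by ring] at h
    exact h
  -- assemble
  have hcover : {p : ℝ × ℝ | 0 < p.1 ∧ 0 < p.2 ∧ ω < p.1 + p.2} ⊆
      (Ioi ω ×ˢ Ioi ω) ∪ (Ioc 0 ω ×ˢ Ioi (2*ω)) ∪ (Ioi (2*ω) ×ˢ Ioc 0 ω) ∪
      ((Icc (ω/2) (2*ω) ×ˢ Icc (ω/2) (2*ω)) ∩ {p : ℝ × ℝ | ω < p.1 + p.2}) ∪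
      ((Ioc 0 (ω/2) ×ˢ Ioc (ω/2) (2*ω)) ∩ {p : ℝ × ℝ | ω < p.1 + p.2}) ∪
      ((Ioc (ω/2) (2*ω) ×ˢ Ioc 0 (ω/2)) ∩ {p : ℝ × ℝ | ω < p.1 + p.2}) := by
    rintro ⟨a, b⟩ ⟨ha, hb, hs⟩
    simp only [Set.mem_union, Set.mem_inter_iff, Set.mem_prod, Set.mem_Ioi, Set.mem_Ioc,
      Set.mem_Icc, Set.mem_setOf_eq] at *
    rcases le_or_gt a (ω/2) with hA | hA
    · rcases le_or_gt b (2*ω) with hB | hB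
      · exact Or.inl (Or.inr ⟨⟨⟨ha, hA⟩, by linarith, hB⟩, hs⟩)
      · exact Or.inl (Or.inl (Or.inl (Or.inl (Or.inr ⟨⟨ha, by linarith⟩, hB⟩))))
    · rcases le_or_gt b (ω/2) with hB | hB
      · rcases le_or_gt a (2*ω) with hA2 | hA2
        · exact Or.inr ⟨⟨⟨hA, hA2⟩, hb, hB⟩, hs⟩
        · exact Or.inl (Or.inl (Or.inl (Or.inr ⟨hA2, hb, by linarith⟩)))
      · rcases le_or_gt a (2*ω) with hA2 | hA2
        · rcases le_or_gt b (2*ω) with hB2 | hB2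
          · exact Or.inl (Or.inl (Or.inr ⟨⟨⟨hA.le, hA2⟩, hB.le, hB2⟩, hs⟩))
          · rcases le_or_gt a ω with h | h
            · exact Or.inl (Or.inl (Or.inl (Or.inl (Or.inr ⟨⟨ha, h⟩, hB2⟩))))
            · exact Or.inl (Or.inl (Or.inl (Or.inl (Or.inl ⟨h, by linarith⟩))))
        · rcases le_or_gt b ω with h | h
          · exact Or.inl (Or.inl (Or.inl (Or.inr ⟨hA2, hb, h⟩)))
          · exact Or.inl (Or.inl (Or.inl (Or.inl (Or.inl ⟨by linarith, h⟩))))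
  exact (((((hR3.union hR1b).union hR2b).union hS1).union hS2).union hS3).mono_set hcover
end

section
/- Fix ω > 0 and a real exponent x with x ≥ 3/2. Then the function G(ω₂,ω₃) = min(√ω, √ω₁, √ω₂, √ω₃) · (ω·ω₁·ω₂·ω₃)^(−x) · (ω^x + ω₁^x − ω₂^x − ω₃^x), where ω₁ = ω₂ + ω₃ − ω, is NOT Lebesgue integrable on Δ_ω = {(ω₂,ω₃) : ω₂ > 0, ω₃ > 0, ω₂ + ω₃ > ω}; the integral of |G| over Δ_ω is infinite (divergence occurring near the boundary ω₂ + ω₃ = ω, i.e. ω₁ → 0). -/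
open MeasureTheory Real Set
open scoped ENNReal NNReal

/-- Divergence of `∫ t^s` near `0` for `s ≤ -1`. -/
lemma collision_aux_base_div (s δ : ℝ) (hs : s ≤ -1) (hδ : 0 < δ) :
    ∫⁻ t in Ioo (0:ℝ) δ, ENNReal.ofReal (t ^ s) = ⊤ := by
  by_contra h
  have hmeas : Measurable fun t : ℝ => t ^ s := by fun_prop
  have hint : IntegrableOn (fun t : ℝ => t ^ s) (Ioo 0 δ) := by
    refine ⟨hmeas.aestronglyMeasurable, ?_⟩
    rw [hasFiniteIntegral_iff_norm]
    have : ∀ᵐ t ∂(volume.restrict (Ioo (0:ℝ) δ)),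
        ENNReal.ofReal ‖t ^ s‖ = ENNReal.ofReal (t ^ s) := by
      filter_upwards [ae_restrict_mem measurableSet_Ioo] with t ht
      rw [Real.norm_eq_abs, abs_of_nonneg (Real.rpow_nonneg ht.1.le s)]
    rw [lintegral_congr_ae this]
    exact lt_top_iff_ne_top.2 h
  rw [intervalIntegral.integrableOn_Ioo_rpow_iff hδ] at hint
  linarith

/-- Shifted version of the base divergence. -/
lemma collision_aux_shift_div (s δ a : ℝ) (hs : s ≤ -1) (hδ : 0 < δ) :
    ∫⁻ b in Ioo a (a + δ), ENNReal.ofReal ((b - a) ^ s) = ⊤ := by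
  have hmp := measurePreserving_add_right (volume : Measure ℝ) a
  have hmeas : Measurable fun b : ℝ => ENNReal.ofReal ((b - a) ^ s) := by fun_prop
  have key := hmp.setLIntegral_comp_preimage
    (measurableSet_Ioo (a := a) (b := a + δ)) hmeas
  rw [← key]
  have hpre : (· + a) ⁻¹' Ioo a (a + δ) = Ioo 0 δ := by
    ext t
    simp only [Set.mem_preimage, Set.mem_Ioo]
    constructor <;> rintro ⟨h1, h2⟩ <;> constructor <;> linarith
  rw [hpre]
  simp_rw [add_sub_cancel_right]
  exact collision_aux_base_div s δ hs hδ

/-- `(11/20)^(3/2) ≤ 9/20`. -/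
lemma collision_aux_numeric : (11/20 : ℝ) ^ ((3:ℝ)/2) ≤ 9/20 := by
  have h0 : (0:ℝ) ≤ 11/20 := by norm_num
  have hy : (0:ℝ) ≤ (11/20 : ℝ) ^ ((3:ℝ)/2) := Real.rpow_nonneg h0 _
  have h1 : ((11/20 : ℝ) ^ ((3:ℝ)/2)) ^ (2:ℕ) = (11/20 : ℝ) ^ ((3:ℝ)) := by
    rw [← Real.rpow_natCast ((11/20 : ℝ) ^ ((3:ℝ)/2)) 2, ← Real.rpow_mul h0]
    norm_num
  have h2 : (11/20 : ℝ) ^ ((3:ℝ)) = 1331/8000 := by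
    rw [show ((3:ℝ)) = ((3:ℕ):ℝ) by norm_num, Real.rpow_natCast]
    norm_num
  nlinarith [h1, h2, hy]

set_option maxHeartbeats 1000000 in
/-- Divergence of the wave-kinetic collision integral on the power-law spectrum
`n_ω = ω^(-x)` for `x ≥ 3/2`: the integrand is not Lebesgue integrable on
`Δ_ω = {(ω₂, ω₃) : ω₂ > 0, ω₃ > 0, ω₂ + ω₃ > ω}`, and the integral of its
absolute value is infinite. -/
theorem collision_integrand_not_integrableOn_of_ge
    (ω x : ℝ) (hω : 0 < ω) (hx : 3 / 2 ≤ x) :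
    ¬ IntegrableOn
        (fun p : ℝ × ℝ =>
          min (Real.sqrt ω)
              (min (Real.sqrt (p.1 + p.2 - ω)) (min (Real.sqrt p.1) (Real.sqrt p.2))) *
            (ω * (p.1 + p.2 - ω) * p.1 * p.2) ^ (-x) *
            (ω ^ x + (p.1 + p.2 - ω) ^ x - p.1 ^ x - p.2 ^ x))
        {p : ℝ × ℝ | 0 < p.1 ∧ 0 < p.2 ∧ ω < p.1 + p.2} ∧
      ∫⁻ p in {p : ℝ × ℝ | 0 < p.1 ∧ 0 < p.2 ∧ ω < p.1 + p.2},
          ENNReal.ofReal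
            |min (Real.sqrt ω)
                (min (Real.sqrt (p.1 + p.2 - ω)) (min (Real.sqrt p.1) (Real.sqrt p.2))) *
              (ω * (p.1 + p.2 - ω) * p.1 * p.2) ^ (-x) *
              (ω ^ x + (p.1 + p.2 - ω) ^ x - p.1 ^ x - p.2 ^ x)| = ⊤ := by
  set G : ℝ × ℝ → ℝ := fun p =>
      min (Real.sqrt ω)
          (min (Real.sqrt (p.1 + p.2 - ω)) (min (Real.sqrt p.1) (Real.sqrt p.2))) *
        (ω * (p.1 + p.2 - ω) * p.1 * p.2) ^ (-x) *
        (ω ^ x + (p.1 + p.2 - ω) ^ x - p.1 ^ x - p.2 ^ x) with hG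
  set Δ : Set (ℝ × ℝ) := {p : ℝ × ℝ | 0 < p.1 ∧ 0 < p.2 ∧ ω < p.1 + p.2} with hΔ
  have hGmeas : Measurable G := by fun_prop
  have hx0 : (0:ℝ) < x := by linarith
  -- the subregion where we show divergence
  set S : Set (ℝ × ℝ) := {p : ℝ × ℝ | p.1 ∈ Ioo (ω/2) (11*ω/20) ∧
      p.2 ∈ Ioo (ω - p.1) (ω - p.1 + ω/20)} with hS
  have hSm : MeasurableSet S := by
    have : S = ({p : ℝ × ℝ | ω/2 < p.1} ∩ {p | p.1 < 11*ω/20}) ∩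
        ({p : ℝ × ℝ | ω - p.1 < p.2} ∩ {p | p.2 < ω - p.1 + ω/20}) := by
      ext p; simp [hS, Set.mem_Ioo]
    rw [this]
    exact (((measurableSet_lt measurable_const measurable_fst).inter
        (measurableSet_lt measurable_fst measurable_const)).inter
      (((measurableSet_lt (by fun_prop) measurable_snd)).inter
        (measurableSet_lt measurable_snd (by fun_prop))))
  have hSΔ : S ⊆ Δ := by
    rintro p ⟨⟨h1, h2⟩, ⟨h3, h4⟩⟩
    refine ⟨by linarith, by linarith, by linarith⟩
  -- the constant
  set c₀ : ℝ := (ω ^ (3:ℕ)) ^ (-x) * (ω ^ x / 10) with hc₀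
  have hω3 : (0:ℝ) < ω ^ (3:ℕ) := by positivity
  have hc₀pos : 0 < c₀ := by
    have := Real.rpow_pos_of_pos hω3 (-x)
    have := Real.rpow_pos_of_pos hω x
    positivity
  -- pointwise lower bound on S
  have hpt : ∀ p ∈ S, c₀ * (p.1 + p.2 - ω) ^ (1/2 - x) ≤ |G p| := by
    rintro ⟨a, b⟩ ⟨⟨h1, h2⟩, ⟨h3, h4⟩⟩
    dsimp only at h1 h2 h3 h4 ⊢
    set t : ℝ := a + b - ω with htdef
    have ht0 : 0 < t := by simp only [htdef]; linarith
    have ht : t < ω/20 := by simp only [htdef]; linarith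
    have ha0 : 0 < a := by linarith
    have hb0 : 9*ω/20 < b := by linarith
    have hb0' : 0 < b := by linarith
    have hbu : b < 11*ω/20 := by linarith
    -- the min is √t
    have hmin : min (Real.sqrt ω)
        (min (Real.sqrt t) (min (Real.sqrt a) (Real.sqrt b))) = Real.sqrt t := by
      have hta : Real.sqrt t ≤ Real.sqrt a := Real.sqrt_le_sqrt (by linarith)
      have htb : Real.sqrt t ≤ Real.sqrt b := Real.sqrt_le_sqrt (by linarith)
      have htw : Real.sqrt t ≤ Real.sqrt ω := Real.sqrt_le_sqrt (by linarith)
      rw [min_eq_left (le_min hta htb), min_eq_right htw]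
    -- product bound
    have hP0 : 0 < ω * t * a * b := by positivity
    have hPle : ω * t * a * b ≤ ω ^ (3:ℕ) * t := by
      have hab : a * b ≤ ω * ω := mul_le_mul (by linarith) (by linarith) hb0'.le hω.le
      calc ω * t * a * b = (ω * t) * (a * b) := by ring
        _ ≤ (ω * t) * (ω * ω) := mul_le_mul_of_nonneg_left hab (by positivity)
        _ = ω ^ (3:ℕ) * t := by ring
    have hPpow : (ω ^ (3:ℕ) * t) ^ (-x) ≤ (ω * t * a * b) ^ (-x) :=
      Real.rpow_le_rpow_of_nonpos hP0 hPle (by linarith)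
    -- bracket bound
    have hbr : ω ^ x / 10 ≤ ω ^ x + t ^ x - a ^ x - b ^ x := by
      have hub : ∀ c : ℝ, 0 < c → c < 11*ω/20 → c ^ x ≤ (9/20) * ω ^ x := by
        intro c hc hcu
        have h1 : c ^ x ≤ (11*ω/20) ^ x :=
          Real.rpow_le_rpow hc.le hcu.le hx0.le
        have h2 : (11*ω/20 : ℝ) ^ x = (11/20 : ℝ) ^ x * ω ^ x := by
          rw [show (11*ω/20 : ℝ) = (11/20) * ω by ring,
            Real.mul_rpow (by norm_num) hω.le]
        have h3 : (11/20 : ℝ) ^ x ≤ (11/20 : ℝ) ^ ((3:ℝ)/2) :=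
          Real.rpow_le_rpow_of_exponent_ge (by norm_num) (by norm_num) (by linarith)
        have h4 := collision_aux_numeric
        have h5 : (0:ℝ) < ω ^ x := Real.rpow_pos_of_pos hω x
        calc c ^ x ≤ (11/20 : ℝ) ^ x * ω ^ x := by rw [← h2]; exact h1
          _ ≤ (9/20) * ω ^ x := by nlinarith
      have hax := hub a ha0 h2
      have hbx := hub b hb0' hbu
      have htx : (0:ℝ) ≤ t ^ x := Real.rpow_nonneg ht0.le x
      nlinarith
    have hbr0 : (0:ℝ) < ω ^ x / 10 := by
      have := Real.rpow_pos_of_pos hω x; positivity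
    -- assemble
    have hGle : c₀ * t ^ (1/2 - x) ≤ G (a, b) := by
      have hGab : G (a, b) = Real.sqrt t * (ω * t * a * b) ^ (-x) *
          (ω ^ x + t ^ x - a ^ x - b ^ x) := by
        rw [hG]; dsimp only; rw [hmin]
      have hsplit : (ω ^ (3:ℕ) * t) ^ (-x) = (ω ^ (3:ℕ)) ^ (-x) * t ^ (-x) :=
        Real.mul_rpow hω3.le ht0.le
      have hts : t ^ (1/2 - x) = Real.sqrt t * t ^ (-x) := by
        rw [Real.sqrt_eq_rpow, ← Real.rpow_add ht0]
        ring_nf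
      have hstep : c₀ * t ^ (1/2 - x)
          = Real.sqrt t * ((ω ^ (3:ℕ)) ^ (-x) * t ^ (-x)) * (ω ^ x / 10) := by
        rw [hts, hc₀]; ring
      rw [hGab, hstep, ← hsplit]
      have hs0 : 0 ≤ Real.sqrt t := Real.sqrt_nonneg t
      have hp1 : 0 < (ω ^ (3:ℕ) * t) ^ (-x) :=
        Real.rpow_pos_of_pos (by positivity) (-x)
      have hp2 : 0 ≤ (ω * t * a * b) ^ (-x) :=
        Real.rpow_nonneg hP0.le (-x)
      have := mul_le_mul hPpow hbr hbr0.le hp2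
      nlinarith [Real.sqrt_pos.2 ht0]
    calc c₀ * t ^ (1/2 - x) ≤ G (a, b) := hGle
      _ ≤ |G (a, b)| := le_abs_self _
  -- divergence over S
  have hkeyS : ∫⁻ p in S, ENNReal.ofReal |G p| = ⊤ := by
    have hmono : ∫⁻ p in S, ENNReal.ofReal (c₀ * (p.1 + p.2 - ω) ^ (1/2 - x))
        ≤ ∫⁻ p in S, ENNReal.ofReal |G p| := by
      refine setLIntegral_mono' hSm fun p hp => ?_
      exact ENNReal.ofReal_le_ofReal (hpt p hp)
    refine eq_top_iff.2 (le_trans ?_ hmono)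
    -- compute the lower integral
    have hg : Measurable fun p : ℝ × ℝ => ENNReal.ofReal ((p.1 + p.2 - ω) ^ (1/2 - x)) := by
      fun_prop
    have hsplitc : ∀ p : ℝ × ℝ, p ∈ S → ENNReal.ofReal (c₀ * (p.1 + p.2 - ω) ^ (1/2 - x))
        = ENNReal.ofReal c₀ * ENNReal.ofReal ((p.1 + p.2 - ω) ^ (1/2 - x)) := by
      intro p _; rw [ENNReal.ofReal_mul hc₀pos.le]
    rw [setLIntegral_congr_fun hSm hsplitc,
      lintegral_const_mul _ hg]
    have hinner : ∫⁻ p in S, ENNReal.ofReal ((p.1 + p.2 - ω) ^ (1/2 - x)) = ⊤ := by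
      rw [← lintegral_indicator hSm]
      rw [Measure.volume_eq_prod]
      rw [lintegral_prod _ ((hg.indicator hSm).aemeasurable)]
      have hsec : ∀ a ∈ Ioo (ω/2) (11*ω/20),
          (∫⁻ b, S.indicator (fun p : ℝ × ℝ =>
            ENNReal.ofReal ((p.1 + p.2 - ω) ^ (1/2 - x))) (a, b)) = ⊤ := by
        intro a ha
        have heq : (fun b => S.indicator (fun p : ℝ × ℝ =>
            ENNReal.ofReal ((p.1 + p.2 - ω) ^ (1/2 - x))) (a, b))
            = (Ioo (ω - a) (ω - a + ω/20)).indicator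
              (fun b => ENNReal.ofReal ((b - (ω - a)) ^ (1/2 - x))) := by
          funext b
          by_cases hb : b ∈ Ioo (ω - a) (ω - a + ω/20)
          · rw [Set.indicator_of_mem hb,
              Set.indicator_of_mem (show (a, b) ∈ S from ⟨ha, hb⟩)]
            congr 2
            ring
          · rw [Set.indicator_of_notMem hb,
              Set.indicator_of_notMem (fun hmem => hb hmem.2)]
        rw [heq, lintegral_indicator measurableSet_Ioo]
        exact collision_aux_shift_div (1/2 - x) (ω/20) (ω - a) (by linarith) (by linarith)
      have hlb : ∫⁻ a in Ioo (ω/2) (11*ω/20), (⊤ : ℝ≥0∞)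
          ≤ ∫⁻ a, ∫⁻ b, S.indicator (fun p : ℝ × ℝ =>
              ENNReal.ofReal ((p.1 + p.2 - ω) ^ (1/2 - x))) (a, b) :=
        calc ∫⁻ a in Ioo (ω/2) (11*ω/20), (⊤ : ℝ≥0∞)
            = ∫⁻ a in Ioo (ω/2) (11*ω/20), ∫⁻ b, S.indicator (fun p : ℝ × ℝ =>
                ENNReal.ofReal ((p.1 + p.2 - ω) ^ (1/2 - x))) (a, b) :=
              setLIntegral_congr_fun measurableSet_Ioo
                (fun a ha => (hsec a ha).symm)
          _ ≤ _ := setLIntegral_le_lintegral _ _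
      refine eq_top_iff.2 (le_trans (le_of_eq ?_) hlb)
      rw [setLIntegral_const, Real.volume_Ioo]
      exact (ENNReal.top_mul (by simp only [ne_eq, ENNReal.ofReal_eq_zero, not_le]; linarith)).symm
    rw [hinner, ENNReal.mul_top]
    simp only [ne_eq, ENNReal.ofReal_eq_zero, not_le]
    exact hc₀pos
  have hkey : ∫⁻ p in Δ, ENNReal.ofReal |G p| = ⊤ :=
    eq_top_iff.2 (le_trans (le_of_eq hkeyS.symm) (lintegral_mono_set hSΔ))
  refine ⟨fun hInt => ?_, hkey⟩
  have hfin := hInt.2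
  rw [hasFiniteIntegral_def] at hfin
  have : ∫⁻ p in Δ, ‖G p‖ₑ = ∫⁻ p in Δ, ENNReal.ofReal |G p| := by
    refine lintegral_congr fun p => ?_
    exact Real.enorm_eq_ofReal_abs (G p)
  rw [this, hkey] at hfin
  exact (lt_irrefl _ hfin)
end

section
/- Fix ω > 0 and a real exponent x with 0 < x < 1. Then the function G(ω₂,ω₃) = min(√ω, √ω₁, √ω₂, √ω₃) · (ω·ω₁·ω₂·ω₃)^(−x) · (ω^x + ω₁^x − ω₂^x − ω₃^x), where ω₁ = ω₂ + ω₃ − ω, is NOT Lebesgue integrable on Δ_ω = {(ω₂,ω₃) : ω₂ > 0, ω₃ > 0, ω₂ + ω₃ > ω}; the integral of |G| over Δ_ω is infinite (divergence occurring at the ultraviolet end ω₂, ω₃ → ∞). -/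
open MeasureTheory Real

/-- Quantitative subadditivity of `t ↦ t^x` for `0 < x < 1`. -/
lemma collision_aux_subadd (x a b : ℝ) (hx0 : 0 < x) (hx1 : x < 1)
    (hb : 0 < b) (hba : b ≤ a) :
    (a + b) ^ x ≤ a ^ x + 2 ^ (x - 1) * b ^ x := by
  have ha : 0 < a := lt_of_lt_of_le hb hba
  have hab : 0 < a + b := by linarith
  have hsplit : (a + b) ^ x = a * (a + b) ^ (x - 1) + b * (a + b) ^ (x - 1) := by
    rw [← add_mul, ← Real.rpow_one_add' (by positivity) (by intro h; linarith)]
    ring_nf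
  have h1 : a * (a + b) ^ (x - 1) ≤ a ^ x := by
    have := Real.rpow_le_rpow_of_nonpos ha (by linarith : a ≤ a + b) (by linarith : x - 1 ≤ 0)
    calc a * (a + b) ^ (x - 1) ≤ a * a ^ (x - 1) :=
          mul_le_mul_of_nonneg_left this ha.le
      _ = a ^ x := by
          rw [← Real.rpow_one_add' (by positivity) (by intro h; linarith)]; ring_nf
  have h2 : b * (a + b) ^ (x - 1) ≤ 2 ^ (x - 1) * b ^ x := by
    have hle : (a + b) ^ (x - 1) ≤ (2 * b) ^ (x - 1) :=
      Real.rpow_le_rpow_of_nonpos (by positivity) (by linarith) (by linarith)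
    have h2b : (2 * b) ^ (x - 1) = 2 ^ (x - 1) * b ^ (x - 1) :=
      Real.mul_rpow (by norm_num) hb.le
    calc b * (a + b) ^ (x - 1) ≤ b * (2 * b) ^ (x - 1) :=
          mul_le_mul_of_nonneg_left hle hb.le
      _ = 2 ^ (x - 1) * (b * b ^ (x - 1)) := by rw [h2b]; ring
      _ = 2 ^ (x - 1) * b ^ x := by
          rw [← Real.rpow_one_add' (by positivity) (by intro h; linarith)]; ring_nf
  linarith [hsplit, h1, h2]

/-- Pointwise lower bound for the collision integrand on a dyadic box. -/
lemma collision_aux_pointwise (ω x c sn a b : ℝ)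
    (hω : 0 < ω) (hx0 : 0 < x) (hx1 : x < 1)
    (hc : c = 1 - 2 ^ (x - 1))
    (hsn : 0 < sn) (hωsn : ω ≤ sn) (hcsn : 2 * ω ^ x ≤ c * sn ^ x)
    (ha1 : 2 * sn < a) (ha2 : a ≤ 3 * sn) (hb1 : 3 / 2 * sn < b) (hb2 : b ≤ 2 * sn) :
    Real.sqrt ω * (30 * ω * sn ^ 3) ^ (-x) * (c / 2 * sn ^ x)
      ≤ |min (Real.sqrt ω)
            (min (Real.sqrt (a + b - ω)) (min (Real.sqrt a) (Real.sqrt b))) *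
          (ω * (a + b - ω) * a * b) ^ (-x) *
          (ω ^ x + (a + b - ω) ^ x - a ^ x - b ^ x)| := by
  have hsnx : 0 < sn ^ x := Real.rpow_pos_of_pos hsn x
  have hωx : 0 < ω ^ x := Real.rpow_pos_of_pos hω x
  have hcpos : 0 < c := by nlinarith
  have ha0 : 0 < a := by linarith
  have hb0 : 0 < b := by linarith
  have hωa : ω ≤ a := by linarith
  have hωb : ω ≤ b := by linarith
  have hω1 : ω ≤ a + b - ω := by linarith
  have h10 : 0 < a + b - ω := by linarith
  have hba : b ≤ a := by linarith
  have hmin : min (Real.sqrt ω)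
      (min (Real.sqrt (a + b - ω)) (min (Real.sqrt a) (Real.sqrt b))) = Real.sqrt ω :=
    min_eq_left (le_min (Real.sqrt_le_sqrt hω1)
      (le_min (Real.sqrt_le_sqrt hωa) (Real.sqrt_le_sqrt hωb)))
  set P : ℝ := ω * (a + b - ω) * a * b with hP
  have hPpos : 0 < P := by positivity
  set D : ℝ := ω ^ x + (a + b - ω) ^ x - a ^ x - b ^ x with hD
  -- bracket bound
  have hDle : D ≤ -(c / 2 * sn ^ x) := by
    have e1 : (a + b - ω) ^ x ≤ (a + b) ^ x :=
      Real.rpow_le_rpow h10.le (by linarith) hx0.le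
    have e2 : (a + b) ^ x ≤ a ^ x + 2 ^ (x - 1) * b ^ x :=
      collision_aux_subadd x a b hx0 hx1 hb0 hba
    have e2' : (a + b) ^ x ≤ a ^ x + (1 - c) * b ^ x := by
      have h : (1:ℝ) - c = 2 ^ (x - 1) := by rw [hc]; ring
      rw [h]; exact e2
    have e3 : sn ^ x ≤ b ^ x := Real.rpow_le_rpow hsn.le (by linarith) hx0.le
    have e6 : c * sn ^ x ≤ c * b ^ x := mul_le_mul_of_nonneg_left e3 hcpos.le
    have e7 : ω ^ x ≤ c / 2 * sn ^ x := by linarith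
    simp only [hD]
    linarith [e1, e2', e6, e7]
  have hD0 : D ≤ 0 := le_trans hDle (by nlinarith)
  -- product bound
  have hPle : P ≤ 30 * ω * sn ^ 3 := by
    have h5 : a + b - ω ≤ 5 * sn := by linarith
    have t1 : ω * (a + b - ω) ≤ ω * (5 * sn) := mul_le_mul_of_nonneg_left h5 hω.le
    have t2 : ω * (a + b - ω) * a ≤ ω * (5 * sn) * (3 * sn) :=
      mul_le_mul t1 ha2 ha0.le (by positivity)
    have t3 : ω * (a + b - ω) * a * b ≤ ω * (5 * sn) * (3 * sn) * (2 * sn) :=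
      mul_le_mul t2 hb2 hb0.le (by positivity)
    simp only [hP]
    nlinarith [t3]
  have hPinv : (30 * ω * sn ^ 3) ^ (-x) ≤ P ^ (-x) :=
    Real.rpow_le_rpow_of_nonpos hPpos hPle (by linarith)
  have habs : |min (Real.sqrt ω)
        (min (Real.sqrt (a + b - ω)) (min (Real.sqrt a) (Real.sqrt b))) *
      (ω * (a + b - ω) * a * b) ^ (-x) *
      (ω ^ x + (a + b - ω) ^ x - a ^ x - b ^ x)|
      = Real.sqrt ω * P ^ (-x) * (-D) := by
    rw [hmin, ← hP, ← hD, abs_mul, abs_mul,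
      abs_of_nonneg (Real.sqrt_nonneg ω),
      abs_of_nonneg (Real.rpow_nonneg hPpos.le _), abs_of_nonpos hD0]
  rw [habs]
  have hsq : 0 ≤ Real.sqrt ω := Real.sqrt_nonneg ω
  have hcs : (0:ℝ) ≤ c / 2 * sn ^ x := by positivity
  have hDge : c / 2 * sn ^ x ≤ -D := by linarith
  calc Real.sqrt ω * (30 * ω * sn ^ 3) ^ (-x) * (c / 2 * sn ^ x)
      ≤ Real.sqrt ω * P ^ (-x) * (c / 2 * sn ^ x) :=
        mul_le_mul_of_nonneg_right (mul_le_mul_of_nonneg_left hPinv hsq) hcs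
    _ ≤ Real.sqrt ω * P ^ (-x) * (-D) := by
        apply mul_le_mul_of_nonneg_left hDge
        positivity

/-- Lower bound for the contribution of one dyadic box. -/
lemma collision_aux_area (w x c s0 sn : ℝ) (hw : 0 < w) (hx0 : 0 < x) (hx1 : x < 1)
    (hc : 0 < c) (hs0 : 0 < s0) (hsn : s0 ≤ sn) :
    Real.sqrt w * (30 * w) ^ (-x) * (c / 4) * s0 ^ (2 - 2 * x)
      ≤ Real.sqrt w * (30 * w * sn ^ 3) ^ (-x) * (c / 2 * sn ^ x) * (sn * (sn / 2)) := by
  have hsn0 : 0 < sn := lt_of_lt_of_le hs0 hsn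
  have e0 : (30 * w * sn ^ 3 : ℝ) ^ (-x) = (30 * w) ^ (-x) * sn ^ (-(3 * x)) := by
    rw [Real.mul_rpow (by positivity) (by positivity), ← Real.rpow_natCast sn 3,
      ← Real.rpow_mul hsn0.le]
    norm_num
  have e1 : sn ^ (-(3 * x)) * sn ^ x * sn ^ (2:ℝ) = sn ^ (2 - 2 * x) := by
    rw [← Real.rpow_add hsn0, ← Real.rpow_add hsn0]; ring_nf
  have e2 : sn ^ (2:ℝ) = sn * sn := by
    rw [show (2:ℝ) = ((2:ℕ):ℝ) by norm_num, Real.rpow_natCast]; ring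
  have key : Real.sqrt w * (30 * w * sn ^ 3) ^ (-x) * (c / 2 * sn ^ x) * (sn * (sn / 2))
      = Real.sqrt w * (30 * w) ^ (-x) * (c / 4) * sn ^ (2 - 2 * x) := by
    rw [e0, ← e1, e2]; ring
  rw [key]
  have hmono : s0 ^ (2 - 2 * x) ≤ sn ^ (2 - 2 * x) :=
    Real.rpow_le_rpow hs0.le hsn (by linarith)
  have h1 : (0:ℝ) ≤ Real.sqrt w * (30 * w) ^ (-x) * (c / 4) := by
    have := Real.rpow_nonneg (by positivity : (0:ℝ) ≤ 30 * w) (-x)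
    have := Real.sqrt_nonneg w
    positivity
  exact mul_le_mul_of_nonneg_left hmono h1

/-- Divergence of the wave-kinetic collision integral on the power-law spectrum
`n_ω = ω^(-x)` for `0 < x < 1`: the integrand is not Lebesgue integrable on
`Δ_ω = {(ω₂, ω₃) : ω₂ > 0, ω₃ > 0, ω₂ + ω₃ > ω}`, and the integral of its
absolute value is infinite. -/
theorem collision_integrand_not_integrableOn_of_lt_one
    (ω x : ℝ) (hω : 0 < ω) (hx0 : 0 < x) (hx1 : x < 1) :
    ¬ IntegrableOn
        (fun p : ℝ × ℝ =>
          min (Real.sqrt ω)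
              (min (Real.sqrt (p.1 + p.2 - ω)) (min (Real.sqrt p.1) (Real.sqrt p.2))) *
            (ω * (p.1 + p.2 - ω) * p.1 * p.2) ^ (-x) *
            (ω ^ x + (p.1 + p.2 - ω) ^ x - p.1 ^ x - p.2 ^ x))
        {p : ℝ × ℝ | 0 < p.1 ∧ 0 < p.2 ∧ ω < p.1 + p.2} ∧
      ∫⁻ p in {p : ℝ × ℝ | 0 < p.1 ∧ 0 < p.2 ∧ ω < p.1 + p.2},
          ENNReal.ofReal
            |min (Real.sqrt ω)
                (min (Real.sqrt (p.1 + p.2 - ω)) (min (Real.sqrt p.1) (Real.sqrt p.2))) *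
              (ω * (p.1 + p.2 - ω) * p.1 * p.2) ^ (-x) *
              (ω ^ x + (p.1 + p.2 - ω) ^ x - p.1 ^ x - p.2 ^ x)| = ⊤ := by
  set G : ℝ × ℝ → ℝ := fun p =>
    min (Real.sqrt ω)
        (min (Real.sqrt (p.1 + p.2 - ω)) (min (Real.sqrt p.1) (Real.sqrt p.2))) *
      (ω * (p.1 + p.2 - ω) * p.1 * p.2) ^ (-x) *
      (ω ^ x + (p.1 + p.2 - ω) ^ x - p.1 ^ x - p.2 ^ x) with hG
  set Δ : Set (ℝ × ℝ) := {p : ℝ × ℝ | 0 < p.1 ∧ 0 < p.2 ∧ ω < p.1 + p.2} with hΔ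
  -- constants
  set c : ℝ := 1 - 2 ^ (x - 1) with hc
  have hcpos : 0 < c := by
    have : (2:ℝ) ^ (x - 1) < 1 :=
      Real.rpow_lt_one_of_one_lt_of_neg one_lt_two (by linarith)
    simp only [hc]; linarith
  set s₀ : ℝ := max ω ((2 * ω ^ x / c) ^ x⁻¹) with hs₀
  have hs₀ω : ω ≤ s₀ := le_max_left _ _
  have hs₀pos : 0 < s₀ := lt_of_lt_of_le hω hs₀ω
  have hcs₀ : 2 * ω ^ x ≤ c * s₀ ^ x := by
    have hbase : (0:ℝ) ≤ 2 * ω ^ x / c := by positivity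
    have h1 : (2 * ω ^ x / c) ^ x⁻¹ ≤ s₀ := le_max_right _ _
    have h2 : ((2 * ω ^ x / c) ^ x⁻¹) ^ x ≤ s₀ ^ x :=
      Real.rpow_le_rpow (by positivity) h1 hx0.le
    rw [← Real.rpow_mul hbase, inv_mul_cancel₀ hx0.ne', Real.rpow_one] at h2
    calc 2 * ω ^ x = c * (2 * ω ^ x / c) := by field_simp
      _ ≤ c * s₀ ^ x := mul_le_mul_of_nonneg_left h2 hcpos.le
  -- dyadic scales and boxes
  set s : ℕ → ℝ := fun n => 2 ^ n * s₀ with hs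
  have hsn_pos : ∀ n, 0 < s n := fun n => by positivity
  have hsn_ge : ∀ n, s₀ ≤ s n := by
    intro n
    have h1 : (1:ℝ) ≤ 2 ^ n := one_le_pow₀ one_le_two
    calc s₀ = 1 * s₀ := (one_mul _).symm
      _ ≤ 2 ^ n * s₀ := mul_le_mul_of_nonneg_right h1 hs₀pos.le
  have hcsn : ∀ n, 2 * ω ^ x ≤ c * s n ^ x := by
    intro n
    refine le_trans hcs₀ (mul_le_mul_of_nonneg_left ?_ hcpos.le)
    exact Real.rpow_le_rpow hs₀pos.le (hsn_ge n) hx0.le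
  set Q : ℕ → Set (ℝ × ℝ) :=
    fun n => Set.Ioc (2 * s n) (3 * s n) ×ˢ Set.Ioc (3 / 2 * s n) (2 * s n) with hQ
  have hQmeas : ∀ n, MeasurableSet (Q n) := fun n =>
    measurableSet_Ioc.prod measurableSet_Ioc
  have hQsub : (⋃ n, Q n) ⊆ Δ := by
    rintro ⟨a, b⟩ hp
    rcases Set.mem_iUnion.1 hp with ⟨n, hn⟩
    obtain ⟨⟨ha1, ha2⟩, hb1, hb2⟩ := hn
    have hsn := hsn_pos n
    have hωsn : ω ≤ s n := le_trans hs₀ω (hsn_ge n)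
    exact ⟨by simpa using by linarith, by simpa using by linarith, by simpa using by linarith⟩
  have hQdisj : Pairwise (Function.onFun Disjoint Q) := by
    have key : ∀ m n : ℕ, m < n → Disjoint (Q m) (Q n) := by
      intro m n hmn
      rw [Set.disjoint_left]
      rintro ⟨a, b⟩ hpm hpn
      obtain ⟨⟨_, ham⟩, _⟩ := hpm
      obtain ⟨⟨han, _⟩, _⟩ := hpn
      have h2 : (2:ℝ) ^ (m + 1) ≤ 2 ^ n := pow_le_pow_right₀ one_le_two hmn
      have h3 := mul_le_mul_of_nonneg_right h2 hs₀pos.le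
      have h4 : (0:ℝ) < 2 ^ m * s₀ := by positivity
      rw [pow_succ] at h3
      have hsm : s m = 2 ^ m * s₀ := rfl
      have hsn' : s n = 2 ^ n * s₀ := rfl
      rw [hsm] at ham
      rw [hsn'] at han
      simp only at ham han
      linarith
    intro m n hmn
    rcases lt_or_gt_of_ne hmn with h | h
    · exact key m n h
    · exact (key n m h).symm
  -- volume of a box
  have hQvol : ∀ n, volume (Q n) = ENNReal.ofReal (s n) * ENNReal.ofReal (s n / 2) := by
    intro n
    rw [hQ]
    simp only
    rw [MeasureTheory.Measure.volume_eq_prod, MeasureTheory.Measure.prod_prod,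
      Real.volume_Ioc, Real.volume_Ioc]
    congr 1 <;> ring_nf
  -- per-box constant
  set K : ℕ → ℝ := fun n => Real.sqrt ω * (30 * ω * s n ^ 3) ^ (-x) * (c / 2 * s n ^ x)
    with hK
  have hK0 : ∀ n, 0 ≤ K n := by
    intro n
    have h1 : (0:ℝ) ≤ (30 * ω * s n ^ 3) ^ (-x) := Real.rpow_nonneg (by positivity) _
    have h2 : (0:ℝ) ≤ c / 2 * s n ^ x :=
      mul_nonneg (by linarith) (Real.rpow_nonneg (hsn_pos n).le x)
    have h3 := Real.sqrt_nonneg ω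
    simp only [hK]
    positivity
  -- pointwise lower bound on each box
  have hpt : ∀ n, ∀ p ∈ Q n, ENNReal.ofReal (K n) ≤ ENNReal.ofReal |G p| := by
    intro n p hp
    obtain ⟨⟨ha1, ha2⟩, hb1, hb2⟩ := hp
    apply ENNReal.ofReal_le_ofReal
    simp only [hK, hG]
    exact collision_aux_pointwise ω x c (s n) p.1 p.2 hω hx0 hx1 hc (hsn_pos n)
      (le_trans hs₀ω (hsn_ge n)) (hcsn n) ha1 ha2 hb1 hb2
  -- fixed positive lower bound for each box integral
  set ε : ℝ := Real.sqrt ω * (30 * ω) ^ (-x) * (c / 4) * s₀ ^ (2 - 2 * x) with hε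
  have hεpos : 0 < ε := by
    have h1 : 0 < Real.sqrt ω := Real.sqrt_pos.2 hω
    have h2 : 0 < (30 * ω) ^ (-x) := Real.rpow_pos_of_pos (by linarith) _
    have h3 : 0 < s₀ ^ (2 - 2 * x) := Real.rpow_pos_of_pos hs₀pos _
    simp only [hε]
    positivity
  have hbox : ∀ n, ENNReal.ofReal ε ≤ ∫⁻ p in Q n, ENNReal.ofReal |G p| := by
    intro n
    have hsn := hsn_pos n
    have step1 : ∫⁻ p in Q n, ENNReal.ofReal (K n) ≤ ∫⁻ p in Q n, ENNReal.ofReal |G p| :=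
      setLIntegral_mono' (hQmeas n) (hpt n)
    rw [setLIntegral_const, hQvol n] at step1
    have e : ENNReal.ofReal (K n * (s n * (s n / 2)))
        = ENNReal.ofReal (K n) * (ENNReal.ofReal (s n) * ENNReal.ofReal (s n / 2)) := by
      rw [ENNReal.ofReal_mul (hK0 n), ENNReal.ofReal_mul hsn.le]
    have hreal : ε ≤ K n * (s n * (s n / 2)) := by
      simp only [hK, hε]
      exact collision_aux_area ω x c s₀ (s n) hω hx0 hx1 hcpos hs₀pos (hsn_ge n)
    calc ENNReal.ofReal ε ≤ ENNReal.ofReal (K n * (s n * (s n / 2))) :=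
          ENNReal.ofReal_le_ofReal hreal
      _ = ENNReal.ofReal (K n) * (ENNReal.ofReal (s n) * ENNReal.ofReal (s n / 2)) := e
      _ ≤ ∫⁻ p in Q n, ENNReal.ofReal |G p| := step1
  -- divergence
  have hTop : ∫⁻ p in Δ, ENNReal.ofReal |G p| = ⊤ := by
    refine eq_top_iff.2 ?_
    calc (⊤ : ENNReal) = ∑' (_ : ℕ), ENNReal.ofReal ε :=
          (ENNReal.tsum_const_eq_top_of_ne_zero
            (by rw [Ne, ENNReal.ofReal_eq_zero]; exact not_le.2 hεpos)).symm
      _ ≤ ∑' n, ∫⁻ p in Q n, ENNReal.ofReal |G p| := ENNReal.tsum_le_tsum hbox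
      _ = ∫⁻ p in ⋃ n, Q n, ENNReal.ofReal |G p| :=
          (lintegral_iUnion hQmeas hQdisj _).symm
      _ ≤ ∫⁻ p in Δ, ENNReal.ofReal |G p| := lintegral_mono_set hQsub
  refine ⟨?_, hTop⟩
  intro h
  have h2 := (hasFiniteIntegral_iff_norm G).1 h.2
  simp only [Real.norm_eq_abs] at h2
  rw [hTop] at h2
  exact lt_irrefl _ h2
end

section
/- Let b > 0 and x, Ã, B̃ be real numbers with x > B̃/b. Let f : (0,∞) → ℝ be differentiable, satisfy x·f(η) + η·f′(η) = Ã/b + (B̃/b)·f(η) for all η > 0, and have a finite limit as η → 0⁺. Then f is constant and equal to Ã/(bx − B̃) for all η > 0. -/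
open Real Filter

/-- Shelf-type behavior at small η: if `x > B̃/b` and a function differentiable on
`(0,∞)` satisfies `x·f(η) + η·f′(η) = Ã/b + (B̃/b)·f(η)` for all `η > 0` and has a
finite limit as `η → 0⁺`, then `f` is the constant `Ã/(bx − B̃)` on `(0,∞)`. -/
theorem small_eta_ode_shelf
    (b x A B : ℝ) (hb : 0 < b) (hx : B / b < x) (f : ℝ → ℝ)
    (hf : ∀ η : ℝ, 0 < η → DifferentiableAt ℝ f η)
    (hode : ∀ η : ℝ, 0 < η → x * f η + η * deriv f η = A / b + (B / b) * f η)
    (hlim : ∃ L : ℝ, Filter.Tendsto f (nhdsWithin 0 (Set.Ioi 0)) (nhds L)) :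
    ∀ η : ℝ, 0 < η → f η = A / (b * x - B) := by
  obtain ⟨L, hL⟩ := hlim
  set c : ℝ := x - B / b with hc
  have hc0 : 0 < c := sub_pos.mpr hx
  set K : ℝ := A / (b * x - B) with hK
  set g : ℝ → ℝ := fun η => η ^ c * (f η - K) with hg
  have hgd : ∀ η : ℝ, 0 < η → HasDerivAt g 0 η := by
    intro η hη
    have h1 : HasDerivAt (fun t : ℝ => t ^ c) (c * η ^ (c - 1)) η :=
      Real.hasDerivAt_rpow_const (Or.inl hη.ne')
    have h2 : HasDerivAt (fun t => f t - K) (deriv f η) η :=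
      ((hf η hη).hasDerivAt).sub_const K
    have h := h1.mul h2
    refine h.congr_deriv (Eq.symm ?_)
    have hode' := hode η hη
    have hden : b * x - B ≠ 0 := by
      have h0 : 0 < b * x - B := by
        have := (div_lt_iff₀ hb).mp hx
        linarith
      linarith
    have hηf : η * deriv f η = -c * (f η - K) := by
      have hKval : c * K = A / b := by
        rw [hK, hc]
        field_simp [hb.ne', hden]
        rw [mul_comm x b]
        exact mul_div_cancel_left₀ A hden
      have h3 : η * deriv f η = A / b + (B / b) * f η - x * f η := by linarith
      have h4 : -c * (f η - K) = -c * f η + c * K := by ring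
      rw [h3, h4, hKval, hc]
      ring
    have hsplit : η ^ c = η ^ (c - 1) * η := by
      rw [← Real.rpow_add_one hη.ne' (c - 1)]
      ring_nf
    symm
    rw [hsplit]
    calc c * η ^ (c - 1) * (f η - K) + η ^ (c - 1) * η * deriv f η
        = η ^ (c - 1) * (c * (f η - K) + η * deriv f η) := by ring
      _ = 0 := by rw [hηf]; ring
  have hconst : ∀ η₁ ∈ Set.Ioi (0:ℝ), ∀ η₂ ∈ Set.Ioi (0:ℝ), g η₁ = g η₂ := by
    intro η₁ h1 η₂ h2
    refine (convex_Ioi (0:ℝ)).is_const_of_fderivWithin_eq_zero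
      (fun t ht => ((hgd t ht).differentiableAt).differentiableWithinAt) ?_ h1 h2
    intro t ht
    rw [fderivWithin_of_isOpen isOpen_Ioi ht, (hgd t ht).hasFDerivAt.fderiv]
    refine ContinuousLinearMap.ext fun y => ?_
    simp
  -- g tends to 0 at 0⁺
  have hpow : Tendsto (fun η : ℝ => η ^ c) (nhdsWithin 0 (Set.Ioi 0)) (nhds 0) := by
    have hcont : ContinuousAt (fun η : ℝ => η ^ c) 0 :=
      Real.continuousAt_rpow_const 0 c (Or.inr hc0.le)
    have h5 : Tendsto (fun η : ℝ => η ^ c) (nhdsWithin 0 (Set.Ioi 0)) (nhds ((0:ℝ) ^ c)) :=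
      (hcont.continuousWithinAt (s := Set.Ioi 0)).tendsto
    rwa [Real.zero_rpow hc0.ne'] at h5
  have hg0 : Tendsto g (nhdsWithin 0 (Set.Ioi 0)) (nhds 0) := by
    have := hpow.mul (hL.sub_const K)
    simpa using this
  intro η hη
  have hgη : Tendsto g (nhdsWithin 0 (Set.Ioi 0)) (nhds (g η)) := by
    refine Tendsto.congr' ?_ tendsto_const_nhds
    filter_upwards [self_mem_nhdsWithin] with t ht
    exact hconst η hη t ht
  have hzero : g η = 0 := tendsto_nhds_unique hgη hg0
  have hηc : η ^ c ≠ 0 := (Real.rpow_pos_of_pos hη c).ne'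
  have : f η - K = 0 := by
    have := hzero
    rw [hg] at this
    exact (mul_eq_zero.mp this).resolve_left hηc
  linarith
end
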